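/- arXiv:math/0410030 — 2 statements merged into one kernel-verified Lean document; each statement's English description precedes it below -/
import Mathlib

section
/- Let g and Q be positive integers with g < Q. Then every g-colored distribution of Q(2^n - 1) pebbles on the path P_n is Q-coverable: there is a sequence of color-respecting pebbling steps after which every vertex carries at least Q pebbles. -/
open SimpleGraph Finset

/-- A pebbling step: remove two pebbles from `u` and place one on an adjacent vertex `v`. -/
def PebblingStep {V : Type*} [DecidableEq V] (G : SimpleGraph V) (D D' : V → ℕ) : Prop :=
  ∃ u v, G.Adj u v ∧ 2 ≤ D u ∧
    D' = fun w => if w = u then D u - 2 else if w = v then D v + 1 else D w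

/-- A distribution is coverable if pebbling steps can put a pebble on every vertex. -/
def Coverable {V : Type*} [DecidableEq V] (G : SimpleGraph V) (D : V → ℕ) : Prop :=
  ∃ D', Relation.ReflTransGen (PebblingStep G) D D' ∧ ∀ v, 1 ≤ D' v

/-- The cover pebbling number: the least `N` such that every distribution of `N` pebbles
is coverable. -/
noncomputable def coverPebblingNumber {V : Type*} [DecidableEq V] [Fintype V]
    (G : SimpleGraph V) : ℕ :=
  sInf {N | ∀ D : V → ℕ, ∑ v, D v = N → Coverable G D}

/-- A color-respecting pebbling step on a colored distribution. -/
def ColorStep {V C : Type*} [DecidableEq V] [DecidableEq C] (G : SimpleGraph V)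
    (D D' : V → C → ℕ) : Prop :=
  ∃ u v c, G.Adj u v ∧ 2 ≤ D u c ∧
    D' = fun w d => if w = u ∧ d = c then D u c - 2
      else if w = v ∧ d = c then D v c + 1 else D w d

/-- A colored distribution is `Q`-coverable if color-respecting steps can put at least `Q`
pebbles on every vertex. -/
def QCoverable {V C : Type*} [DecidableEq V] [DecidableEq C] [Fintype C] (G : SimpleGraph V)
    (Q : ℕ) (D : V → C → ℕ) : Prop :=
  ∃ D', Relation.ReflTransGen (ColorStep G) D D' ∧ ∀ v, Q ≤ ∑ c, D' v c

/-- A graph is good if its cover pebbling number is realized by a simple distribution. -/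
def IsGood {V : Type*} [DecidableEq V] [Fintype V] (G : SimpleGraph V) : Prop :=
  ∃ u : V, coverPebblingNumber G = ∑ w : V, 2 ^ G.dist u w

/-!
Induct on the length `L` of a path segment carrying at least `Q (2 ^ L - 1)` pebbles. Pick `m`
with `m + 1 < L` such that `p 0, …, p (m - 1)` carry at most `Q (2 ^ m - 1)` pebbles while
`p 0, …, p m` carry at least `Q (2 ^ (m + 1) - 1)`, with excess `e`. Moving `⌊e / 2⌋` pebbles
from `p m` to `p (m + 1)` leaves the prefix with `Q (2 ^ (m + 1) - 1)` pebbles and the suffix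
with `Q (2 ^ (L - m - 1) - 1)`, so both are covered by induction. The moves are available:
`p m` holds at least `e + Q` pebbles, and since at most `|C| ≤ Q + 1` colors have an odd count
there, they contain `⌊e / 2⌋` pairs of equal color. If no such `m` exists, the last vertex holds
at least `Q` pebbles and the split at `m = 0` is applied to the reversed path.
-/

open Relation

theorem mul_two_pow_succ_sub_one (Q m : ℕ) :
    Q * (2 ^ (m + 1) - 1) = 2 * (Q * (2 ^ m - 1)) + Q := by
  have := Nat.one_le_two_pow (n := m)
  zify [this, Nat.one_le_two_pow (n := m + 1)]
  ring

theorem two_mul_add_le_mul_two_pow_add_sub_one (Q : ℕ) {a : ℕ} (ha : 1 ≤ a) (b : ℕ) :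
    2 * (Q * (2 ^ b - 1)) + Q * (2 ^ a - 1) ≤ Q * (2 ^ (a + b) - 1) := by
  have hx : 2 ≤ 2 ^ a := le_self_pow₀ one_le_two (by omega)
  have hy := Nat.one_le_two_pow (n := b)
  zify [hy, hx.trans' one_le_two, Nat.one_le_two_pow (n := a + b)]
  rw [pow_add]
  have : (0 : ℤ) ≤ ((2 : ℤ) ^ a - 2) * (2 ^ b - 1) :=
    mul_nonneg (by linarith [(by exact_mod_cast hx : (2 : ℤ) ≤ 2 ^ a)])
      (by linarith [(by exact_mod_cast hy : (1 : ℤ) ≤ 2 ^ b)])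
  nlinarith

theorem exists_le_sum_eq {ι : Type*} [Fintype ι] (b : ι → ℕ) {N : ℕ}
    (h : N ≤ ∑ i, b i) : ∃ y ≤ b, ∑ i, y i = N := by
  classical
  induction N with
  | zero => exact ⟨0, fun _ => Nat.zero_le _, by simp⟩
  | succ N ih =>
    obtain ⟨y, hyb, hy⟩ := ih (by omega)
    obtain ⟨i, -, hi⟩ := exists_lt_of_sum_lt (hy ▸ h : ∑ j, y j < ∑ j, b j)
    refine ⟨y + Pi.single i 1, fun j => ?_, ?_⟩
    · by_cases hj : j = i
      · subst hj; simpa using hi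
      · simpa [hj] using hyb j
    · simp [sum_add_distrib, hy]

theorem exists_two_nsmul_le_sum_eq_half {C : Type*} [Fintype C] {Q : ℕ}
    (hC : Fintype.card C ≤ Q + 1) (a : C → ℕ) {E : ℕ} (hE : E + Q ≤ ∑ c, a c) :
    ∃ y : C → ℕ, 2 • y ≤ a ∧ ∑ c, y c = E / 2 := by
  have hpairs : ∑ c, a c ≤ 2 * ∑ c, a c / 2 + Fintype.card C := by
    rw [mul_sum, Fintype.card_eq_sum_ones, ← sum_add_distrib]
    exact sum_le_sum fun c _ => by omega
  obtain ⟨y, hy, hsum⟩ := exists_le_sum_eq (fun c => a c / 2) (N := E / 2) (by omega)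
  refine ⟨y, fun c => ?_, hsum⟩
  have : y c ≤ a c / 2 := hy c
  simp only [Pi.smul_apply, smul_eq_mul]
  omega

section PathSegment

variable {V : Type*} {G : SimpleGraph V}

structure IsPathSegment (G : SimpleGraph V) (p : ℕ → V) (L : ℕ) : Prop where
  adj : ∀ i, i + 1 < L → G.Adj (p i) (p (i + 1))
  injOn : Set.InjOn p (Set.Iio L)

namespace IsPathSegment

variable {p : ℕ → V} {L M K : ℕ}

theorem take (hp : IsPathSegment G p (M + K)) : IsPathSegment G p M :=
  ⟨fun i hi => hp.adj i (by omega),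
    hp.injOn.mono fun i (hi : i < M) => show i < M + K by omega⟩

theorem drop (hp : IsPathSegment G p (M + K)) : IsPathSegment G (fun i => p (M + i)) K := by
  refine ⟨fun i hi => hp.adj (M + i) (by omega), fun i (hi : i < K) j (hj : j < K) h => ?_⟩
  have := hp.injOn (show M + i < M + K by omega) (show M + j < M + K by omega) h
  omega

theorem reverse (hp : IsPathSegment G p L) : IsPathSegment G (fun i => p (L - 1 - i)) L := by
  refine ⟨fun i hi => ?_, fun i (hi : i < L) j (hj : j < L) h => ?_⟩
  · have := (hp.adj (L - 1 - (i + 1)) (by omega)).symm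
    rwa [show L - 1 - (i + 1) + 1 = L - 1 - i by omega] at this
  · have := hp.injOn (show L - 1 - i < L by omega) (show L - 1 - j < L by omega) h
    omega

end IsPathSegment

theorem isPathSegment_pathGraph (n : ℕ) [NeZero n] :
    IsPathSegment (pathGraph n) (Fin.ofNat n) n := by
  refine ⟨fun i hi => ?_, fun i (hi : i < n) j (hj : j < n) h => ?_⟩
  · simp [pathGraph_adj, Nat.mod_eq_of_lt hi, Nat.mod_eq_of_lt (show i < n by omega)]
  · simpa [Fin.ext_iff, Nat.mod_eq_of_lt hi, Nat.mod_eq_of_lt hj] using h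

end PathSegment

section SegmentSum

variable {V C : Type*} [Fintype C]

def segmentSum (p : ℕ → V) (L : ℕ) (D : V → C → ℕ) : ℕ :=
  ∑ i ∈ range L, ∑ c, D (p i) c

section

variable (p : ℕ → V) (L : ℕ)

theorem segmentSum_add (D E : V → C → ℕ) :
    segmentSum p L (D + E) = segmentSum p L D + segmentSum p L E := by
  simp only [segmentSum, Pi.add_apply, sum_add_distrib]

theorem segmentSum_succ (D : V → C → ℕ) :
    segmentSum p (L + 1) D = segmentSum p L D + ∑ c, D (p L) c :=
  sum_range_succ _ _

theorem segmentSum_append (M K : ℕ) (D : V → C → ℕ) :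
    segmentSum p (M + K) D = segmentSum p M D + segmentSum (fun i => p (M + i)) K D :=
  sum_range_add _ _ _

theorem segmentSum_reverse (D : V → C → ℕ) :
    segmentSum (fun i => p (L - 1 - i)) L D = segmentSum p L D :=
  sum_range_reflect (fun i => ∑ c, D (p i) c) L

variable {p L}

theorem segmentSum_congr {D E : V → C → ℕ} (h : ∀ i < L, D (p i) = E (p i)) :
    segmentSum p L D = segmentSum p L E :=
  sum_congr rfl fun i hi => by rw [h i (mem_range.mp hi)]

theorem segmentSum_single_of_lt [DecidableEq V] (hp : Set.InjOn p (Set.Iio L)) {i : ℕ}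
    (hi : i < L) (s : C → ℕ) : segmentSum p L (Pi.single (p i) s) = ∑ c, s c := by
  rw [segmentSum, sum_eq_single_of_mem i (mem_range.mpr hi)]
  · simp
  · intro j hj hji
    rw [Pi.single_eq_of_ne fun h => hji (hp (mem_range.mp hj) hi h)]
    simp

theorem segmentSum_single_of_forall_ne [DecidableEq V] {u : V} (hu : ∀ i < L, p i ≠ u)
    (s : C → ℕ) :
    segmentSum p L (Pi.single u s) = 0 :=
  sum_eq_zero fun i hi => by simp [Pi.single_eq_of_ne (hu i (mem_range.mp hi))]

end

theorem exists_segmentSum_split {p : ℕ → V} {L Q : ℕ} {D : V → C → ℕ} (hL : 2 ≤ L)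
    (hD : Q * (2 ^ L - 1) ≤ segmentSum p L D) :
    (∃ m, m + 1 < L ∧ segmentSum p m D ≤ Q * (2 ^ m - 1) ∧
      Q * (2 ^ (m + 1) - 1) ≤ segmentSum p (m + 1) D) ∨ Q ≤ ∑ c, D (p (L - 1)) c := by
  classical
  have hex : ∃ k, Q * (2 ^ (k + 1) - 1) ≤ segmentSum p (k + 1) D :=
    ⟨L - 1, by rwa [Nat.sub_add_cancel (by omega)]⟩
  have below {k : ℕ} (hk : k < Nat.find hex) :
      segmentSum p (k + 1) D < Q * (2 ^ (k + 1) - 1) :=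
    not_le.mp (Nat.find_min hex hk)
  by_cases hm : Nat.find hex + 1 < L
  · refine .inl ⟨Nat.find hex, hm, ?_, Nat.find_spec hex⟩
    cases h : Nat.find hex with
    | zero => simp [segmentSum]
    | succ k => exact (below (by omega)).le
  · right
    have h1 := below (k := L - 2) (by omega)
    have h2 := segmentSum_succ p (L - 1) D
    have h3 := mul_two_pow_succ_sub_one Q (L - 1)
    rw [show L - 2 + 1 = L - 1 by omega] at h1
    rw [Nat.sub_add_cancel (by omega)] at h2 h3
    omega

end SegmentSum

section ColorStep

variable {V C : Type*} [DecidableEq V] [DecidableEq C] {G : SimpleGraph V}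

theorem ColorStep.add_right {D D' : V → C → ℕ} (h : ColorStep G D D') (F : V → C → ℕ) :
    ColorStep G (D + F) (D' + F) := by
  obtain ⟨u, v, c, huv, h2, rfl⟩ := h
  refine ⟨u, v, c, huv, le_add_right h2, ?_⟩
  have hvu := (G.ne_of_adj huv).symm
  funext w d
  by_cases hu : w = u ∧ d = c
  · obtain ⟨rfl, rfl⟩ := hu
    simp only [Pi.add_apply, and_self, ite_true]
    omega
  · by_cases hv : w = v ∧ d = c
    · obtain ⟨rfl, rfl⟩ := hv
      simp [hvu, add_right_comm]
    · simp [hu, hv]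

theorem ColorStep.reflTransGen_add {A B A' B' : V → C → ℕ}
    (h : ReflTransGen (ColorStep G) A B) (h' : ReflTransGen (ColorStep G) A' B') :
    ReflTransGen (ColorStep G) (A + A') (B + B') := by
  refine (h.lift (· + A') fun _ _ hs => hs.add_right A').trans ?_
  simpa only [add_comm B] using h'.lift (· + B) fun _ _ hs => hs.add_right B

theorem ColorStep.reflTransGen_sum {ι : Type*} (s : Finset ι) {A B : ι → V → C → ℕ}
    (h : ∀ i ∈ s, ReflTransGen (ColorStep G) (A i) (B i)) :
    ReflTransGen (ColorStep G) (∑ i ∈ s, A i) (∑ i ∈ s, B i) := by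
  classical
  induction s using Finset.induction_on with
  | empty => simpa using ReflTransGen.refl
  | insert a s ha ih =>
    rw [sum_insert ha, sum_insert ha]
    exact reflTransGen_add (h a (mem_insert_self a s)) (ih fun i hi => h i (mem_insert_of_mem hi))

theorem ColorStep.single {u v : V} (huv : G.Adj u v) (c : C) :
    ColorStep G (Pi.single u (Pi.single c 2)) (Pi.single v (Pi.single c 1)) := by
  refine ⟨u, v, c, huv, by simp, ?_⟩
  have huv' := G.ne_of_adj huv
  funext w d
  by_cases hw : w = u <;> by_cases hw' : w = v <;> by_cases hd : d = c <;>
    simp_all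

theorem ColorStep.reflTransGen_move [Fintype C] {u v : V} (huv : G.Adj u v) (s : C → ℕ) :
    ReflTransGen (ColorStep G) (Pi.single u (2 • s)) (Pi.single v s) := by
  have split (w : V) (k : ℕ) :
      (Pi.single w (k • s) : V → C → ℕ) =
        ∑ c, ∑ _ ∈ range (s c), Pi.single w (Pi.single c k : C → ℕ) := by
    ext w' d
    by_cases hw : w' = w <;> simp [Pi.single_apply, hw, Finset.sum_apply, mul_comm]
  rw [split u 2, ← one_smul ℕ s, split v 1, one_smul]
  exact reflTransGen_sum _ fun c _ => reflTransGen_sum _ fun _ _ => .single (.single huv c)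

end ColorStep

section SegmentCoverable

variable {V C : Type*} [DecidableEq V] [DecidableEq C] [Fintype C] {G : SimpleGraph V}

def SegmentCoverable (G : SimpleGraph V) (Q : ℕ) (p : ℕ → V) (L : ℕ) (D : V → C → ℕ) :
    Prop :=
  ∃ D', ReflTransGen (ColorStep G) D D' ∧ (∀ i < L, Q ≤ ∑ c, D' (p i) c) ∧
    Set.EqOn D' D (p '' Set.Iio L)ᶜ

namespace SegmentCoverable

variable {Q : ℕ} {p : ℕ → V} {L : ℕ} {D : V → C → ℕ}

theorem of_lt_two (hL : L < 2) (hD : Q * (2 ^ L - 1) ≤ segmentSum p L D) :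
    SegmentCoverable G Q p L D := by
  refine ⟨D, .refl, fun i hi => ?_, Set.eqOn_refl _ _⟩
  obtain ⟨rfl, rfl⟩ : i = 0 ∧ L = 1 := by omega
  simpa [segmentSum] using hD

theorem head {D₁ : V → C → ℕ} (h : ReflTransGen (ColorStep G) D D₁)
    (hD₁ : Set.EqOn D₁ D (p '' Set.Iio L)ᶜ) (h₁ : SegmentCoverable G Q p L D₁) :
    SegmentCoverable G Q p L D := by
  obtain ⟨D', h', hcov, heq⟩ := h₁
  exact ⟨D', h.trans h', hcov, heq.trans hD₁⟩

theorem of_reverse (h : SegmentCoverable G Q (fun i => p (L - 1 - i)) L D) :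
    SegmentCoverable G Q p L D := by
  obtain ⟨D', h', hcov, heq⟩ := h
  have himage : (fun i => p (L - 1 - i)) '' Set.Iio L = p '' Set.Iio L := by
    ext v
    constructor
    · rintro ⟨i, hi, rfl⟩
      exact ⟨L - 1 - i, by simp at hi ⊢; omega, rfl⟩
    · rintro ⟨i, hi, rfl⟩
      have hi : i < L := hi
      refine ⟨L - 1 - i, show L - 1 - i < L by omega, ?_⟩
      simp [Nat.sub_sub_self (show i ≤ L - 1 by omega)]
  refine ⟨D', h', fun i hi => ?_, himage ▸ heq⟩
  simpa [show L - 1 - (L - 1 - i) = i by omega] using hcov (L - 1 - i) (by omega)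

theorem append {M K : ℕ} (hp : Set.InjOn p (Set.Iio (M + K)))
    (h₁ : SegmentCoverable G Q p M D)
    (h₂ : ∀ D', (∀ i < K, D' (p (M + i)) = D (p (M + i))) →
      SegmentCoverable G Q (fun i => p (M + i)) K D') :
    SegmentCoverable G Q p (M + K) D := by
  have hne {i j : ℕ} (hi : i < M) (hj : j < K) : p i ≠ p (M + j) := fun h => by
    have := hp (show i < M + K by omega) (show M + j < M + K by omega) h
    omega
  obtain ⟨D₁, h₁, hcov₁, heq₁⟩ := h₁
  obtain ⟨D₂, h₂, hcov₂, heq₂⟩ := h₂ D₁ fun i hi =>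
    heq₁ fun ⟨j, (hj : j < M), hji⟩ => hne hj hi hji
  refine ⟨D₂, h₁.trans h₂, fun i hi => ?_, fun v hv => ?_⟩
  · by_cases hiM : i < M
    · rw [heq₂ fun ⟨j, (hj : j < K), hji⟩ => hne hiM hj hji.symm]
      exact hcov₁ i hiM
    · simpa [show M + (i - M) = i by omega] using hcov₂ (i - M) (by omega)
  · have hv' (i : ℕ) (hi : i < M + K) : p i ≠ v := fun h => hv ⟨i, hi, h⟩
    rw [heq₂ fun ⟨j, (hj : j < K), hjv⟩ => hv' (M + j) (by omega) hjv,
      heq₁ fun ⟨j, (hj : j < M), hjv⟩ => hv' j (by omega) hjv]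

theorem of_transfer {m K : ℕ} (hp : IsPathSegment G p (m + 1 + K)) (hK : 0 < K)
    (hprefix : ∀ D : V → C → ℕ, Q * (2 ^ (m + 1) - 1) ≤ segmentSum p (m + 1) D →
      SegmentCoverable G Q p (m + 1) D)
    (hsuffix : ∀ D : V → C → ℕ,
      Q * (2 ^ K - 1) ≤ segmentSum (fun i => p (m + 1 + i)) K D →
      SegmentCoverable G Q (fun i => p (m + 1 + i)) K D)
    (y : C → ℕ) (E : V → C → ℕ) (hE : Q * (2 ^ (m + 1) - 1) ≤ segmentSum p (m + 1) E)
    (hyE : Q * (2 ^ K - 1) ≤ ∑ c, y c + segmentSum (fun i => p (m + 1 + i)) K E) :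
    SegmentCoverable G Q p (m + 1 + K) (Pi.single (p m) (2 • y) + E) := by
  have hmove := ColorStep.reflTransGen_add (ColorStep.reflTransGen_move (hp.adj m (by omega)) y)
    (.refl : ReflTransGen (ColorStep G) E E)
  refine head hmove (fun v hv => ?_) (append hp.injOn (hprefix _ ?_) fun D' hD' => hsuffix D' ?_)
  · have hvm : v ≠ p m := fun h => hv ⟨m, show m < m + 1 + K by omega, h.symm⟩
    have hvm' : v ≠ p (m + 1) := fun h => hv ⟨m + 1, show m + 1 < m + 1 + K by omega, h.symm⟩
    simp [Pi.single_eq_of_ne hvm, Pi.single_eq_of_ne hvm']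
  · have hout : ∀ i < m + 1, p i ≠ p (m + 1) := fun i hi h => by
      have := hp.injOn (show i < m + 1 + K by omega) (show m + 1 < m + 1 + K by omega) h
      omega
    rwa [segmentSum_add, segmentSum_single_of_forall_ne hout, zero_add]
  · have hy := segmentSum_single_of_lt hp.drop.injOn (i := 0) hK y
    simp only [add_zero] at hy
    rwa [segmentSum_congr hD', segmentSum_add, hy]

theorem of_split (hC : Fintype.card C ≤ Q + 1)
    (ih : ∀ L' < L, ∀ (p : ℕ → V) (D : V → C → ℕ), IsPathSegment G p L' →
      Q * (2 ^ L' - 1) ≤ segmentSum p L' D → SegmentCoverable G Q p L' D)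
    (hp : IsPathSegment G p L) {m : ℕ} (hm : m + 1 < L)
    (hlow : segmentSum p m D ≤ Q * (2 ^ m - 1))
    (hhigh : Q * (2 ^ (m + 1) - 1) ≤ segmentSum p (m + 1) D)
    (hD : Q * (2 ^ L - 1) ≤ segmentSum p L D) : SegmentCoverable G Q p L D := by
  obtain ⟨K, rfl⟩ : ∃ K, L = m + 1 + K := ⟨L - (m + 1), by omega⟩
  have hWm := mul_two_pow_succ_sub_one Q m
  have hWL := two_mul_add_le_mul_two_pow_add_sub_one Q (le_add_self : 1 ≤ m + 1) K
  have hsucc := segmentSum_succ p m D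
  obtain ⟨y, hy, hysum⟩ := exists_two_nsmul_le_sum_eq_half hC (D (p m))
    (E := segmentSum p (m + 1) D - Q * (2 ^ (m + 1) - 1)) (by omega)
  have hle : (Pi.single (p m) (2 • y) : V → C → ℕ) ≤ D := fun w => by
    by_cases hw : w = p m
    · subst hw; simpa using hy
    · simp [Pi.single_eq_of_ne hw]
  obtain ⟨E, rfl⟩ := exists_add_of_le hle
  have hprefix : segmentSum p (m + 1) (Pi.single (p m) (2 • y) + E) =
      2 * ∑ c, y c + segmentSum p (m + 1) E := by
    rw [segmentSum_add, segmentSum_single_of_lt hp.take.injOn (Nat.lt_succ_self m)]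
    simp [mul_sum]
  have hsuffix : segmentSum (fun i => p (m + 1 + i)) K (Pi.single (p m) (2 • y) + E) =
      segmentSum (fun i => p (m + 1 + i)) K E := by
    rw [segmentSum_add, segmentSum_single_of_forall_ne (u := p m), zero_add]
    intro i hi h
    have := hp.injOn (show m + 1 + i < m + 1 + K by omega) (show m < m + 1 + K by omega) h
    omega
  rw [segmentSum_append, hsuffix] at hD
  exact of_transfer hp (by omega) (fun D => ih (m + 1) (by omega) p D hp.take)
    (fun D => ih K (by omega) _ D hp.drop) y E (by omega) (by omega)

end SegmentCoverable

theorem segmentCoverable_of_le {Q : ℕ} (hC : Fintype.card C ≤ Q + 1) (L : ℕ) :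
    ∀ (p : ℕ → V) (D : V → C → ℕ), IsPathSegment G p L →
      Q * (2 ^ L - 1) ≤ segmentSum p L D → SegmentCoverable G Q p L D := by
  induction L using Nat.strong_induction_on with
  | _ L ih =>
  intro p D hp hD
  by_cases hL : L < 2
  · exact .of_lt_two hL hD
  rcases exists_segmentSum_split (by omega) hD with ⟨m, hm, hlow, hhigh⟩ | hlast
  · exact .of_split hC ih hp hm hlow hhigh hD
  · exact .of_reverse (.of_split hC ih hp.reverse (m := 0) (by omega) (by simp [segmentSum])
      (by simpa [segmentSum] using hlast) (by rwa [segmentSum_reverse]))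

end SegmentCoverable

theorem path_Q_coverable_general (g Q n : ℕ) (hgQ : g < Q)
    (D : Fin n → Fin g → ℕ) (htot : ∑ i, ∑ c, D i c = Q * (2 ^ n - 1)) :
    QCoverable (pathGraph n) Q D := by
  obtain rfl | hn := eq_zero_or_neZero n
  · exact ⟨D, .refl, fun v => v.elim0⟩
  have hsum : segmentSum (Fin.ofNat n) n D = ∑ i, ∑ c, D i c := by
    rw [segmentSum, ← Fin.sum_univ_eq_sum_range (fun i => ∑ c, D (Fin.ofNat n i) c)]
    simp
  obtain ⟨D', hD', hcov, -⟩ := segmentCoverable_of_le (by simp; omega) n _ D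
    (isPathSegment_pathGraph n) (hsum ▸ htot.ge)
  exact ⟨D', hD', fun v => by simpa using hcov v v.isLt⟩

theorem path_Q_coverable (g Q n : ℕ) (hg : 0 < g) (hgQ : g < Q)
    (D : Fin n → Fin g → ℕ) (htot : ∑ i, ∑ c, D i c = Q * (2 ^ n - 1)) :
    QCoverable (pathGraph n) Q D :=
  path_Q_coverable_general g Q n hgQ D htot
end

section
/- If G and H are good graphs, then there exists a simple distribution (a distribution all of whose pebbles lie on a single vertex) on G □ H that requires exactly γ(G)·γ(H) pebbles to cover G □ H. In particular, γ(G □ H) ≥ γ(G)·γ(H). -/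
open SimpleGraph Finset

/-! The key vertices `u` of `G` and `v` of `H` give the vertex `(u, v)` of `G □ H`, whose
distances are sums of distances in the factors, so covering `G □ H` from `(u, v)` takes
`(∑ 2 ^ dist u ·) * (∑ 2 ^ dist v ·) = γ(G) γ(H)` pebbles. That no fewer pebbles on a single
vertex `p` suffice is the usual weight argument: the weight `∑ D q * 2 ^ dist p q` of a
distribution never increases under a pebbling step, is `N` for `N` pebbles on `p`, and is at
least `∑ 2 ^ dist p q` once every vertex carries a pebble. -/

namespace SimpleGraph

variable {Vg Vh : Type*} {G : SimpleGraph Vg} {H : SimpleGraph Vh}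

theorem Connected.dist_boxProd (hG : G.Connected) (hH : H.Connected) (x y : Vg × Vh) :
    (G □ H).dist x y = G.dist x.1 y.1 + H.dist x.2 y.2 := by
  rw [dist, dist, dist, edist_boxProd, ENat.toNat_add (edist_ne_top_iff_reachable.2 (hG x.1 y.1))
    (edist_ne_top_iff_reachable.2 (hH x.2 y.2))]

theorem Connected.sum_two_pow_dist_boxProd [Fintype Vg] [Fintype Vh] (hG : G.Connected)
    (hH : H.Connected) (u : Vg) (v : Vh) :
    ∑ q : Vg × Vh, 2 ^ (G □ H).dist (u, v) q =
      (∑ a, 2 ^ G.dist u a) * ∑ b, 2 ^ H.dist v b := by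
  simp only [Fintype.sum_prod_type, Finset.sum_mul_sum, hG.dist_boxProd hH, pow_add]

end SimpleGraph

section Pebbling

variable {V : Type*} [DecidableEq V] {K : SimpleGraph V}

theorem pebblingStep_iff {D D' : V → ℕ} :
    PebblingStep K D D' ↔ ∃ u v, K.Adj u v ∧ D' + Pi.single u 2 = D + Pi.single v 1 := by
  constructor
  · rintro ⟨u, v, huv, h2, rfl⟩
    refine ⟨u, v, huv, funext fun w => ?_⟩
    simp only [Pi.add_apply, Pi.single_apply]
    split_ifs <;> grind [huv.ne]
  · rintro ⟨u, v, huv, h⟩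
    have hpt w := congrFun h w
    simp only [Pi.add_apply, Pi.single_apply] at hpt
    refine ⟨u, v, huv, by grind [huv.ne], funext fun w => ?_⟩
    split_ifs <;> grind [huv.ne]

theorem PebblingStep.add_right {D D' : V → ℕ} (h : PebblingStep K D D') (E : V → ℕ) :
    PebblingStep K (D + E) (D' + E) := by
  obtain ⟨u, v, huv, h⟩ := pebblingStep_iff.1 h
  exact pebblingStep_iff.2 ⟨u, v, huv, by rw [add_right_comm, h, add_right_comm]⟩

theorem reflTransGen_pebblingStep_add {D₁ D₁' D₂ D₂' : V → ℕ}
    (h₁ : Relation.ReflTransGen (PebblingStep K) D₁ D₁')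
    (h₂ : Relation.ReflTransGen (PebblingStep K) D₂ D₂') :
    Relation.ReflTransGen (PebblingStep K) (D₁ + D₂) (D₁' + D₂') := by
  have h₁' := Relation.ReflTransGen.lift (· + D₂)
    (fun _ _ (h : PebblingStep K _ _) => h.add_right D₂) _ _ h₁
  have h₂' := Relation.ReflTransGen.lift (D₁' + ·) (fun _ _ (h : PebblingStep K _ _) => by
    simpa only [add_comm D₁'] using h.add_right D₁') _ _ h₂
  exact h₁'.trans h₂'

theorem reflTransGen_pebblingStep_sum {ι : Type*} (s : Finset ι) {D D' : ι → V → ℕ}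
    (h : ∀ i ∈ s, Relation.ReflTransGen (PebblingStep K) (D i) (D' i)) :
    Relation.ReflTransGen (PebblingStep K) (∑ i ∈ s, D i) (∑ i ∈ s, D' i) := by
  induction s using Finset.cons_induction with
  | empty => exact .refl
  | cons i s hi ih =>
    rw [Finset.sum_cons, Finset.sum_cons]
    exact reflTransGen_pebblingStep_add (h i (s.mem_cons_self i))
      (ih fun j hj => h j (Finset.mem_cons_of_mem hj))

theorem reflTransGen_pebblingStep_single_of_adj {u v : V} (huv : K.Adj u v) (k : ℕ) :
    Relation.ReflTransGen (PebblingStep K) (Pi.single u (2 * k)) (Pi.single v k) := by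
  induction k with
  | zero => simp only [mul_zero, Pi.single_zero]; exact .refl
  | succ k ih =>
    have hstep : PebblingStep K (Pi.single u 2) (Pi.single v 1) :=
      pebblingStep_iff.2 ⟨u, v, huv, add_comm _ _⟩
    rw [mul_add_one, Pi.single_add, Pi.single_add]
    exact reflTransGen_pebblingStep_add ih (.single hstep)

theorem reflTransGen_pebblingStep_single_of_walk {p q : V} (w : K.Walk p q) :
    Relation.ReflTransGen (PebblingStep K) (Pi.single p (2 ^ w.length)) (Pi.single q 1) := by
  induction w with
  | nil => exact .refl
  | cons huv w ih =>
    rw [Walk.length_cons, pow_succ']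
    exact (reflTransGen_pebblingStep_single_of_adj huv _).trans ih

variable [Fintype V]

theorem coverable_of_sum_two_pow_dist_le (hK : K.Connected) {p : V} {D : V → ℕ}
    (hD : ∑ q, 2 ^ K.dist p q ≤ D p) : Coverable K D := by
  set S : V → ℕ := Pi.single p (∑ q, 2 ^ K.dist p q) with hS
  have hSD : S ≤ D := fun w => by
    by_cases hw : w = p
    · subst hw; simpa [hS] using hD
    · simp [hS, hw]
  have hspread : Relation.ReflTransGen (PebblingStep K) S (fun _ => 1) := by
    have hsplit : S = ∑ q, Pi.single p (2 ^ K.dist p q) := map_sum (AddMonoidHom.single _ p) _ _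
    rw [hsplit, ← Finset.univ_sum_single (fun _ => 1)]
    refine reflTransGen_pebblingStep_sum _ fun q _ => ?_
    obtain ⟨w, hw⟩ := hK.exists_walk_length_eq_dist p q
    simpa [hw] using reflTransGen_pebblingStep_single_of_walk w
  have hreach := reflTransGen_pebblingStep_add hspread (.refl (a := D - S))
  rw [add_tsub_cancel_of_le hSD] at hreach
  exact ⟨_, hreach, fun v => by simp⟩

/-- Pigeonhole: some vertex holds enough pebbles to cover from it. Without this bound the `sInf`
in `coverPebblingNumber` could be the junk value `sInf ∅ = 0`. -/
theorem exists_forall_coverable (hK : K.Connected) :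
    ∃ N, ∀ D : V → ℕ, ∑ v, D v = N → Coverable K D := by
  have : Nonempty V := hK.nonempty
  set B := ∑ p, ∑ q, 2 ^ K.dist p q
  refine ⟨Fintype.card V * B, fun D hD => ?_⟩
  obtain ⟨p, -, hp⟩ : ∃ p ∈ Finset.univ, B ≤ D p :=
    exists_le_of_sum_le Finset.univ_nonempty (by simp [hD])
  exact coverable_of_sum_two_pow_dist_le hK
    ((Finset.single_le_sum (fun _ _ => Nat.zero_le _) (Finset.mem_univ p)).trans hp)

theorem dotProduct_le_of_reflTransGen_pebblingStep {c : V → ℕ}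
    (hc : ∀ u v, K.Adj u v → c v ≤ 2 * c u) {D D' : V → ℕ}
    (h : Relation.ReflTransGen (PebblingStep K) D D') : D' ⬝ᵥ c ≤ D ⬝ᵥ c := by
  induction h with
  | refl => exact le_rfl
  | tail _ hstep ih =>
    obtain ⟨u, v, huv, h⟩ := pebblingStep_iff.1 hstep
    have hw := congrArg (· ⬝ᵥ c) h
    simp only [add_dotProduct, single_dotProduct] at hw
    have := hc u v huv
    omega

theorem sum_two_pow_dist_le_of_coverable_single {p : V} {N : ℕ}
    (h : Coverable K (Pi.single p N)) : ∑ q, 2 ^ K.dist p q ≤ N := by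
  obtain ⟨D', hD', hcov⟩ := h
  have hc : ∀ u v, K.Adj u v → 2 ^ K.dist p v ≤ 2 * 2 ^ K.dist p u := fun u v huv => by
    rw [← pow_succ', ← dist_eq_one_iff_adj.2 huv]
    exact Nat.pow_le_pow_right two_pos (huv.reachable.dist_triangle_right p)
  calc ∑ q, 2 ^ K.dist p q = (fun _ => 1) ⬝ᵥ fun q => 2 ^ K.dist p q := by simp [dotProduct]
    _ ≤ D' ⬝ᵥ fun q => 2 ^ K.dist p q :=
        dotProduct_le_dotProduct_of_nonneg_right hcov (fun _ => Nat.zero_le _)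
    _ ≤ Pi.single p N ⬝ᵥ fun q => 2 ^ K.dist p q :=
        dotProduct_le_of_reflTransGen_pebblingStep hc hD'
    _ = N := by simp [single_dotProduct]

theorem sum_two_pow_dist_le_coverPebblingNumber (hK : K.Connected) (p : V) :
    ∑ q, 2 ^ K.dist p q ≤ coverPebblingNumber K :=
  le_csInf (exists_forall_coverable hK) fun N hN =>
    sum_two_pow_dist_le_of_coverable_single (hN _ (Fintype.sum_pi_single' p N))

end Pebbling

theorem good_prod_lower_bound {Vg Vh : Type*}
    [DecidableEq Vg] [Fintype Vg] [DecidableEq Vh] [Fintype Vh]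
    (G : SimpleGraph Vg) (H : SimpleGraph Vh)
    (hGc : G.Connected) (hHc : H.Connected) (hG : IsGood G) (hH : IsGood H) :
    (∃ p : Vg × Vh, ∑ q : Vg × Vh, 2 ^ (G □ H).dist p q =
        coverPebblingNumber G * coverPebblingNumber H) ∧
      coverPebblingNumber G * coverPebblingNumber H ≤ coverPebblingNumber (G □ H) := by
  obtain ⟨u, hu⟩ := hG
  obtain ⟨v, hv⟩ := hH
  have hkey : ∑ q : Vg × Vh, 2 ^ (G □ H).dist (u, v) q =
      coverPebblingNumber G * coverPebblingNumber H := by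
    rw [hGc.sum_two_pow_dist_boxProd hHc, hu, hv]
  refine ⟨⟨(u, v), hkey⟩, ?_⟩
  rw [← hkey]
  exact sum_two_pow_dist_le_coverPebblingNumber (hGc.boxProd hHc) (u, v)
end
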